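/- arXiv:2410.19273 — 9 statements merged into one kernel-verified Lean document; each statement's English description precedes it below -/
import Mathlib

section
/- Let m : (0,∞) → ℝ be continuously differentiable with m(r) > 0, m'(r) ≥ 0 for all r > 0, and suppose lim_{r→∞} r·m'(r)/m(r) = 0, together with the bound m'(lr) ≤ l^C m'(r) for all l ≥ 1 and r > 0 (for some constant C > 0). Then for every l > 0, lim_{ρ→0⁺} m(l/ρ)/m(1/ρ) = 1. -/
open Set Filter Topology

/-!
In logarithmic coordinates `f s = log (m (exp s))` the hypothesis `r * m' r / m r → 0` says
`f' → 0`, so by the mean value theorem the increment `f (s + log l) - f s` tends to `0`, and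
`m (l * r) / m r = exp (f (log r + log l) - f (log r))`.
-/

theorem tendsto_sub_comp_add_atTop_of_tendsto_deriv {E : Type*} [NormedAddCommGroup E]
    [NormedSpace ℝ E] {f f' : ℝ → E} (hf : ∀ᶠ x in atTop, HasDerivAt f (f' x) x)
    (hf' : Tendsto f' atTop (𝓝 0)) (a : ℝ) :
    Tendsto (fun x => f (x + a) - f x) atTop (𝓝 0) := by
  rw [Metric.tendsto_nhds]
  intro ε hε
  set δ := ε / (|a| + 1)
  have hδ : 0 < δ := by positivity
  obtain ⟨R, hR⟩ := eventually_atTop.1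
    (hf.and (hf'.norm.eventually (gt_mem_nhds (by simpa using hδ))))
  filter_upwards [eventually_ge_atTop (R + |a|)] with x hx
  have hxR : x ∈ Ici R := by simp only [mem_Ici]; linarith [abs_nonneg a]
  have hxaR : x + a ∈ Ici R := by simp only [mem_Ici]; linarith [neg_abs_le a]
  have hinc : ‖f (x + a) - f x‖ ≤ δ * ‖x + a - x‖ :=
    (convex_Ici R).norm_image_sub_le_of_norm_hasDerivWithin_le
      (fun y hy => (hR y hy).1.hasDerivWithinAt) (fun y hy => (hR y hy).2.le) hxR hxaR
  calc dist (f (x + a) - f x) 0 = ‖f (x + a) - f x‖ := dist_zero_right _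
    _ ≤ δ * |a| := by simpa using hinc
    _ < ε := by
      rw [div_mul_eq_mul_div, div_lt_iff₀ (by positivity)]
      nlinarith

theorem tendsto_div_comp_mul_atTop_of_tendsto_mul_deriv_div {m m' : ℝ → ℝ}
    (hderiv : ∀ r > 0, HasDerivAt m (m' r) r) (hmpos : ∀ r > 0, 0 < m r)
    (hlim : Tendsto (fun r => r * m' r / m r) atTop (𝓝 0)) {l : ℝ} (hl : 0 < l) :
    Tendsto (fun r => m (l * r) / m r) atTop (𝓝 1) := by
  set f : ℝ → ℝ := fun s => Real.log (m (Real.exp s))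
  have hf : ∀ s, HasDerivAt f (Real.exp s * m' (Real.exp s) / m (Real.exp s)) s := fun s => by
    have := ((hderiv _ (Real.exp_pos s)).comp s (Real.hasDerivAt_exp s)).log
      (hmpos _ (Real.exp_pos s)).ne'
    simpa only [Function.comp_apply, mul_comm (m' _)] using this
  have hinc := (tendsto_sub_comp_add_atTop_of_tendsto_deriv (Eventually.of_forall hf)
    (hlim.comp Real.tendsto_exp_atTop) (Real.log l)).comp Real.tendsto_log_atTop
  have hexp := (Real.continuous_exp.tendsto 0).comp hinc
  rw [Real.exp_zero] at hexp
  refine hexp.congr' ?_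
  filter_upwards [eventually_gt_atTop 0] with r hr
  simp only [Function.comp_apply, f, Real.exp_add, Real.exp_log hr, Real.exp_log hl,
    Real.exp_sub, Real.exp_log (hmpos _ hr), mul_comm r l,
    Real.exp_log (hmpos _ (mul_pos hl hr))]

theorem stmt2_general (m m' : ℝ → ℝ)
    (hderiv : ∀ r > 0, HasDerivAt m (m' r) r)
    (hmpos : ∀ r > 0, 0 < m r)
    (hlim : Tendsto (fun r => r * m' r / m r) atTop (𝓝 0)) :
    ∀ l > (0:ℝ),
      Tendsto (fun ρ => m (l / ρ) / m (1 / ρ)) (𝓝[>] 0) (𝓝 1) := by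
  intro l hl
  have hinv : Tendsto (fun ρ : ℝ => 1 / ρ) (𝓝[>] 0) atTop := by
    simpa only [one_div] using tendsto_inv_nhdsGT_zero
  refine ((tendsto_div_comp_mul_atTop_of_tendsto_mul_deriv_div hderiv hmpos hlim hl).comp
    hinv).congr fun ρ => ?_
  simp only [Function.comp_apply, mul_one_div]

/-- slow variation of `m` at infinity. -/
theorem stmt2 (m m' : ℝ → ℝ) (C : ℝ) (hC : 0 < C)
    (hderiv : ∀ r > 0, HasDerivAt m (m' r) r)
    (hcont : ContinuousOn m' (Set.Ioi 0))
    (hmpos : ∀ r > 0, 0 < m r)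
    (hm'pos : ∀ r > 0, 0 ≤ m' r)
    (hlim : Tendsto (fun r => r * m' r / m r) atTop (𝓝 0))
    (hdoub : ∀ r > 0, ∀ l ≥ (1:ℝ), m' (l * r) ≤ l ^ C * m' r) :
    ∀ l > (0:ℝ),
      Tendsto (fun ρ => m (l / ρ) / m (1 / ρ)) (𝓝[>] 0) (𝓝 1) :=
  stmt2_general m m' hderiv hmpos hlim
end

section
/- Let m : (0,∞) → ℝ be continuously differentiable with m(r) > 0 and m'(r) ≥ 0 for all r > 0, and suppose lim_{r→∞} r·(log r)·m'(r)/m(r) = γ for some finite γ ≥ 0 and lim_{r→∞} m(r) = +∞. Then for every ε ∈ (0, 1/2), there exist constants C ≥ 1 and R₀ > 0 such that C^{-1} ≤ m(r) ≤ C r^ε for all r ≥ R₀. -/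
open Set Filter Topology

/-- sub-algebraic growth bounds for `m` under the log-derivative limit `γ`. -/
theorem stmt3 (m m' : ℝ → ℝ) (γ : ℝ) (hγ : 0 ≤ γ)
    (hderiv : ∀ r > 0, HasDerivAt m (m' r) r)
    (hcont : ContinuousOn m' (Set.Ioi 0))
    (hmpos : ∀ r > 0, 0 < m r)
    (hm'pos : ∀ r > 0, 0 ≤ m' r)
    (hlim : Tendsto (fun r => r * Real.log r * m' r / m r) atTop (𝓝 γ))
    (hinf : Tendsto m atTop atTop) :
    ∀ ε ∈ Set.Ioo (0:ℝ) (1/2), ∃ C ≥ (1:ℝ), ∃ R₀ > (0:ℝ),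
      ∀ r ≥ R₀, C⁻¹ ≤ m r ∧ m r ≤ C * r ^ ε := by
  intro ε hε
  obtain ⟨hε0, hε12⟩ := hε
  -- Step 1: r * m' r / m r → 0
  have hloginv : Tendsto (fun r : ℝ => (Real.log r)⁻¹) atTop (𝓝 0) :=
    tendsto_inv_atTop_zero.comp Real.tendsto_log_atTop
  have h0 : Tendsto (fun r => r * m' r / m r) atTop (𝓝 0) := by
    have hmul := hlim.mul hloginv
    rw [mul_zero] at hmul
    refine hmul.congr' ?_
    filter_upwards [eventually_ge_atTop (3:ℝ)] with r hr
    have hr0 : 0 < r := by linarith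
    have hlogr : 0 < Real.log r := Real.log_pos (by linarith)
    have hm : m r ≠ 0 := ne_of_gt (hmpos r hr0)
    field_simp
  -- Step 2: eventually r * m' r / m r < ε and m r ≥ 1
  have hev : ∀ᶠ r in atTop, r * m' r / m r < ε ∧ 1 ≤ m r := by
    filter_upwards [h0.eventually_lt_const hε0, hinf.eventually_ge_atTop 1] with r h1 h2
    exact ⟨h1, h2⟩
  obtain ⟨R, hR⟩ := hev.exists_forall_of_atTop
  set R₀ := max R 1 with hR₀def
  have hR₀1 : (1:ℝ) ≤ R₀ := le_max_right _ _
  have hR₀0 : (0:ℝ) < R₀ := lt_of_lt_of_le one_pos hR₀1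
  -- g = log (m r) - ε * log r is antitone on [R₀, ∞)
  set g : ℝ → ℝ := fun r => Real.log (m r) - ε * Real.log r with hgdef
  have hgderiv : ∀ x > (0:ℝ), HasDerivAt g (m' x / m x - ε * x⁻¹) x := by
    intro x hx
    exact ((hderiv x hx).log (ne_of_gt (hmpos x hx))).sub
      ((Real.hasDerivAt_log (ne_of_gt hx)).const_mul ε)
  have hanti : AntitoneOn g (Set.Ici R₀) := by
    refine antitoneOn_of_deriv_nonpos (convex_Ici R₀) ?_ ?_ ?_
    · intro x hx
      have hx0 : 0 < x := lt_of_lt_of_le hR₀0 hx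
      exact ((hgderiv x hx0).differentiableAt).continuousAt.continuousWithinAt
    · intro x hx
      rw [interior_Ici] at hx
      have hx0 : 0 < x := lt_trans hR₀0 hx
      exact ((hgderiv x hx0).differentiableAt).differentiableWithinAt
    · intro x hx
      rw [interior_Ici] at hx
      have hx0 : 0 < x := lt_trans hR₀0 hx
      have hxR : R ≤ x := le_trans (le_max_left R 1) (le_of_lt hx)
      rw [(hgderiv x hx0).deriv]
      have h1 : x * m' x / m x ≤ ε := le_of_lt (hR x hxR).1
      have hm : 0 < m x := hmpos x hx0
      rw [sub_nonpos]
      rw [div_le_iff₀ hm] at h1 ⊢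
      calc m' x = (x * m' x) / x := by field_simp
        _ ≤ ε * m x / x := by gcongr
        _ = ε * x⁻¹ * m x := by field_simp
  -- Step 3: conclusion
  refine ⟨max 1 (m R₀), le_max_left _ _, R₀, hR₀0, ?_⟩
  intro r hr
  have hr0 : 0 < r := lt_of_lt_of_le hR₀0 hr
  have hrR : R ≤ r := le_trans (le_max_left R 1) hr
  have hm1 : 1 ≤ m r := (hR r hrR).2
  constructor
  · calc (max 1 (m R₀))⁻¹ ≤ 1 := inv_le_one_of_one_le₀ (le_max_left _ _)
      _ ≤ m r := hm1
  · have hg : g r ≤ g R₀ := hanti (Set.self_mem_Ici) hr hr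
    have hlogR₀ : 0 ≤ Real.log R₀ := Real.log_nonneg hR₀1
    have h2 : Real.log (m r) ≤ Real.log (m R₀) + ε * Real.log r := by
      simp only [hgdef] at hg
      nlinarith [mul_nonneg (le_of_lt hε0) hlogR₀]
    have hmr : 0 < m r := hmpos r hr0
    have hmR₀ : 0 < m R₀ := hmpos R₀ hR₀0
    calc m r = Real.exp (Real.log (m r)) := (Real.exp_log hmr).symm
      _ ≤ Real.exp (Real.log (m R₀) + ε * Real.log r) := Real.exp_le_exp.2 h2
      _ = m R₀ * r ^ ε := by
          rw [Real.exp_add, Real.exp_log hmR₀, Real.rpow_def_of_pos hr0]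
          ring_nf
      _ ≤ max 1 (m R₀) * r ^ ε := by
          apply mul_le_mul_of_nonneg_right (le_max_right _ _)
          exact Real.rpow_nonneg (le_of_lt hr0) ε
end

section
/- Let G : (0,∞) → ℝ be continuously differentiable and positive on (0, c₀), satisfying: (i) G is non-increasing on (0, c₀); (ii) lim_{ρ→0⁺} (ρ G'(ρ) + α G(ρ))/G(ρ) = 0 for some α > 0. Then for every l > 0, lim_{ρ→0⁺} l^α G(lρ)/G(ρ) = 1. -/
/-!
Put `g ρ = α log ρ + log G(ρ) = log (ρ^α G(ρ))`. The hypothesis on `G` says exactly that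
`ρ g'(ρ) → 0`, i.e. the derivative of `g ∘ exp` tends to `0` at `-∞`. By the mean value
theorem for `g ∘ exp` on `[log ρ, log ρ + log l]`, `g(lρ) - g(ρ) → 0`, and exponentiating gives
`l^α G(lρ)/G(ρ) → 1`.
-/

open Set Filter Topology

open Real in
theorem abs_sub_le_mul_abs_log_sub {g g' : ℝ → ℝ} {δ ε : ℝ}
    (hg : ∀ x ∈ Ioo 0 δ, HasDerivAt g (g' x) x ∧ |x * g' x| ≤ ε) {x y : ℝ}
    (hx : x ∈ Ioo 0 δ) (hy : y ∈ Ioo 0 δ) :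
    |g y - g x| ≤ ε * |log y - log x| := by
  have hexp : ∀ t ∈ Iio (log δ), exp t ∈ Ioo 0 δ := fun t ht =>
    ⟨exp_pos t, (lt_log_iff_exp_lt (hx.1.trans hx.2)).mp ht⟩
  have hlog : ∀ z ∈ Ioo 0 δ, log z ∈ Iio (log δ) := fun z hz => log_lt_log hz.1 hz.2
  -- `g ∘ exp` is `ε`-Lipschitz on `(-∞, log δ)`.
  have := (convex_Iio (log δ)).norm_image_sub_le_of_norm_hasDerivWithin_le
    (f := g ∘ exp) (f' := fun t => g' (exp t) * exp t)
    (fun t ht => (((hg _ (hexp t ht)).1.comp t (hasDerivAt_exp t))).hasDerivWithinAt)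
    (fun t ht => by simpa only [norm_eq_abs, mul_comm] using (hg _ (hexp t ht)).2)
    (hlog x hx) (hlog y hy)
  simpa only [Function.comp_apply, exp_log hx.1, exp_log hy.1, norm_eq_abs] using this

theorem tendsto_sub_comp_const_mul_of_tendsto_mul_deriv {g g' : ℝ → ℝ}
    (hg : ∀ᶠ x in 𝓝[>] 0, HasDerivAt g (g' x) x)
    (hlim : Tendsto (fun x => x * g' x) (𝓝[>] 0) (𝓝 0)) {l : ℝ} (hl : 0 < l) :
    Tendsto (fun ρ => g (l * ρ) - g ρ) (𝓝[>] 0) (𝓝 0) := by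
  rw [Metric.tendsto_nhds]
  intro ε hε
  set C := |Real.log l| + 1
  have hC : 0 < C := by positivity
  have hsmall : ∀ᶠ x in 𝓝[>] 0, HasDerivAt g (g' x) x ∧ |x * g' x| ≤ ε / C := by
    filter_upwards [hg, (Metric.tendsto_nhds.mp hlim) (ε / C) (by positivity)] with x hx hx'
    exact ⟨hx, by simpa only [Real.dist_eq, sub_zero] using hx'.le⟩
  obtain ⟨δ, hδ, hδsub⟩ := mem_nhdsGT_iff_exists_Ioo_subset.mp hsmall
  have hIoo : ∀ᶠ x in 𝓝[>] (0 : ℝ), x ∈ Ioo 0 δ := Ioo_mem_nhdsGT hδ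
  filter_upwards [hIoo, eventually_nhdsGT_zero_mul_left hl hIoo] with ρ hρ hlρ
  rw [Real.dist_eq, sub_zero]
  calc |g (l * ρ) - g ρ| ≤ ε / C * |Real.log (l * ρ) - Real.log ρ| :=
        abs_sub_le_mul_abs_log_sub hδsub hρ hlρ
    _ = ε / C * |Real.log l| := by
        rw [Real.log_mul hl.ne' hρ.1.ne', add_sub_cancel_right]
    _ < ε := by
        rw [div_mul_eq_mul_div, div_lt_iff₀ hC]
        nlinarith

theorem stmt7_general (G G' : ℝ → ℝ) (c₀ α : ℝ) (hc₀ : 0 < c₀)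
    (hderiv : ∀ ρ ∈ Set.Ioo (0:ℝ) c₀, HasDerivAt G (G' ρ) ρ)
    (hpos : ∀ ρ ∈ Set.Ioo (0:ℝ) c₀, 0 < G ρ)
    (hlim : Tendsto (fun ρ => (ρ * G' ρ + α * G ρ) / G ρ) (𝓝[>] 0) (𝓝 0)) :
    ∀ l > (0:ℝ),
      Tendsto (fun ρ => l ^ α * G (l * ρ) / G ρ) (𝓝[>] 0) (𝓝 1) := by
  intro l hl
  have hnear : ∀ᶠ ρ in 𝓝[>] (0 : ℝ), ρ ∈ Ioo 0 c₀ := Ioo_mem_nhdsGT hc₀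
  set g : ℝ → ℝ := fun x => α * Real.log x + Real.log (G x)
  have hg : ∀ᶠ x in 𝓝[>] (0 : ℝ), HasDerivAt g (α * x⁻¹ + G' x / G x) x := by
    filter_upwards [hnear] with x hx
    exact ((Real.hasDerivAt_log hx.1.ne').const_mul α).add ((hderiv x hx).log (hpos x hx).ne')
  have hg_lim : Tendsto (fun x => x * (α * x⁻¹ + G' x / G x)) (𝓝[>] 0) (𝓝 0) := by
    refine hlim.congr' ?_
    filter_upwards [hnear] with x hx
    field_simp [hx.1.ne', (hpos x hx).ne']
    ring
  have hratio : ∀ᶠ ρ in 𝓝[>] (0 : ℝ), Real.exp (g (l * ρ) - g ρ) = l ^ α * G (l * ρ) / G ρ := by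
    filter_upwards [hnear, eventually_nhdsGT_zero_mul_left hl hnear] with ρ hρ hlρ
    simp only [g, Real.log_mul hl.ne' hρ.1.ne', Real.exp_sub, Real.exp_add,
      Real.exp_log (hpos _ hρ), Real.exp_log (hpos _ hlρ), Real.rpow_def_of_pos hl]
    rw [mul_add, Real.exp_add]
    field_simp
  simpa only [Real.exp_zero] using
    ((Real.continuous_exp.tendsto 0).comp
      (tendsto_sub_comp_const_mul_of_tendsto_mul_deriv hg hg_lim hl)).congr' hratio

/-- regular variation `l^α G(lρ)/G(ρ) → 1` as `ρ → 0⁺`. -/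
theorem stmt7 (G G' : ℝ → ℝ) (c₀ α : ℝ) (hc₀ : 0 < c₀) (hα : 0 < α)
    (hderiv : ∀ ρ ∈ Set.Ioo (0:ℝ) c₀, HasDerivAt G (G' ρ) ρ)
    (hcont : ContinuousOn G' (Set.Ioo 0 c₀))
    (hpos : ∀ ρ ∈ Set.Ioo (0:ℝ) c₀, 0 < G ρ)
    (hmono : AntitoneOn G (Set.Ioo 0 c₀))
    (hlim : Tendsto (fun ρ => (ρ * G' ρ + α * G ρ) / G ρ) (𝓝[>] 0) (𝓝 0)) :
    ∀ l > (0:ℝ),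
      Tendsto (fun ρ => l ^ α * G (l * ρ) / G ρ) (𝓝[>] 0) (𝓝 1) :=
  stmt7_general G G' c₀ α hc₀ hderiv hpos hlim
end

section
/- Let g : ℝ → ℝ be a 2π-periodic nonnegative C¹ function and let σ ∈ [0,1] with g' ∈ C^σ. Then for every ζ ∈ ℝ, |g'(ζ)| ≤ 2 ‖g'‖_{C^σ}^{1/(1+σ)} · g(ζ)^{σ/(1+σ)}, where ‖g'‖_{C^σ} denotes the σ-Hölder norm of g'. -/
open Set

/-!
Since `g ≥ 0`, the first-order Taylor estimate `g (ζ ∓ h) ≤ g ζ ∓ h g' ζ + M h ^ (1 + σ)` forces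
`h (|g' ζ| - M h ^ σ) ≤ g ζ` for every step `h ≥ 0`. Choosing `h` with `M h ^ σ = |g' ζ| / 2`
balances the two terms and gives the interpolation inequality.
-/

theorem abs_sub_sub_mul_le_of_holder_deriv {g g' : ℝ → ℝ} {σ M : ℝ} (hσ : 0 ≤ σ) (hM : 0 ≤ M)
    (hderiv : ∀ x, HasDerivAt g (g' x) x)
    (hHolder : ∀ x y : ℝ, |g' x - g' y| ≤ M * |x - y| ^ σ) (x y : ℝ) :
    |g y - g x - g' x * (y - x)| ≤ M * |y - x| ^ σ * |y - x| := by
  have hderiv_sub : ∀ z, HasDerivAt (fun z => g z - g' x * z) (g' z - g' x) z := fun z => by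
    have := (hderiv z).sub ((hasDerivAt_id' z).const_mul (g' x))
    rwa [mul_one] at this
  have hbound : ∀ z ∈ uIcc x y, ‖g' z - g' x‖ ≤ M * |y - x| ^ σ := fun z hz =>
    (hHolder z x).trans <| mul_le_mul_of_nonneg_left
      (Real.rpow_le_rpow (abs_nonneg _) (abs_sub_left_of_mem_uIcc hz) hσ) hM
  have := (convex_uIcc x y).norm_image_sub_le_of_norm_hasDerivWithin_le
    (fun z _ => (hderiv_sub z).hasDerivWithinAt) hbound left_mem_uIcc right_mem_uIcc
  simp only [Real.norm_eq_abs] at this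
  convert this using 2
  ring

theorem mul_sub_le_of_nonneg_of_holder_deriv {g g' : ℝ → ℝ} {σ M : ℝ} (hσ : 0 ≤ σ) (hM : 0 ≤ M)
    (hnonneg : ∀ x, 0 ≤ g x) (hderiv : ∀ x, HasDerivAt g (g' x) x)
    (hHolder : ∀ x y : ℝ, |g' x - g' y| ≤ M * |x - y| ^ σ) (x : ℝ) {h : ℝ} (hh : 0 ≤ h) :
    h * (|g' x| - M * h ^ σ) ≤ g x := by
  have taylor := abs_sub_sub_mul_le_of_holder_deriv hσ hM hderiv hHolder x
  have taylor_back := (abs_le.1 (taylor (x - h))).2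
  have taylor_fwd := (abs_le.1 (taylor (x + h))).2
  simp only [sub_sub_cancel_left, add_sub_cancel_left, abs_neg, abs_of_nonneg hh]
    at taylor_back taylor_fwd
  have hback := hnonneg (x - h)
  have hfwd := hnonneg (x + h)
  cases abs_cases (g' x) <;> nlinarith

theorem nonpos_of_forall_mul_le {c G : ℝ} (h : ∀ t ≥ 0, t * c ≤ G) : c ≤ 0 := by
  by_contra! hc
  have := h ((|G| + 1) / c) (by positivity)
  rw [div_mul_cancel₀ _ hc.ne'] at this
  linarith [le_abs_self G]

theorem le_two_mul_rpow_mul_rpow_of_forall_mul_sub_le_of_pos {A M G σ : ℝ} (hA : 0 < A)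
    (hM : 0 < M) (hσ : 0 < σ) (h : ∀ t ≥ 0, t * (A - M * t ^ σ) ≤ G) :
    A ≤ 2 * M ^ (1 / (1 + σ)) * G ^ (σ / (1 + σ)) := by
  obtain ⟨s, hs, rfl⟩ : ∃ s > 0, A = 2 * M * s := ⟨A / (2 * M), by positivity, by field_simp⟩
  have hGs : M * s ^ ((1 + σ) / σ) ≤ G := by
    have ht := h (s ^ (1 / σ)) (by positivity)
    rw [← Real.rpow_mul hs.le, one_div_mul_cancel hσ.ne', Real.rpow_one] at ht
    calc M * s ^ ((1 + σ) / σ) = s ^ (1 / σ) * (2 * M * s - M * s) := by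
          rw [add_div, div_self hσ.ne', Real.rpow_add hs, Real.rpow_one]
          ring
      _ ≤ G := ht
  have hGpow : M ^ (σ / (1 + σ)) * s ≤ G ^ (σ / (1 + σ)) :=
    calc M ^ (σ / (1 + σ)) * s = (M * s ^ ((1 + σ) / σ)) ^ (σ / (1 + σ)) := by
          rw [Real.mul_rpow hM.le (by positivity), ← Real.rpow_mul hs.le,
            div_mul_div_cancel₀ hσ.ne', div_self (by positivity), Real.rpow_one]
      _ ≤ G ^ (σ / (1 + σ)) := Real.rpow_le_rpow (by positivity) hGs (by positivity)
  have hMsplit : M ^ (1 / (1 + σ)) * M ^ (σ / (1 + σ)) = M := by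
    rw [← Real.rpow_add hM, ← add_div, div_self (by positivity), Real.rpow_one]
  calc 2 * M * s = 2 * M ^ (1 / (1 + σ)) * (M ^ (σ / (1 + σ)) * s) := by
        linear_combination (-2 * s) * hMsplit
    _ ≤ 2 * M ^ (1 / (1 + σ)) * G ^ (σ / (1 + σ)) := by gcongr

theorem le_two_mul_rpow_mul_rpow_of_forall_mul_sub_le {A M G σ : ℝ} (hM : 0 ≤ M) (hσ : 0 ≤ σ)
    (h : ∀ t ≥ 0, t * (A - M * t ^ σ) ≤ G) :
    A ≤ 2 * M ^ (1 / (1 + σ)) * G ^ (σ / (1 + σ)) := by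
  have hG : 0 ≤ G := by simpa using h 0 le_rfl
  rcases hσ.eq_or_lt with rfl | hσ
  · have := nonpos_of_forall_mul_le fun t ht => by simpa using h t ht
    simp only [add_zero, div_one, Real.rpow_one, Real.rpow_zero]
    linarith
  have hrhs : 0 ≤ 2 * M ^ (1 / (1 + σ)) * G ^ (σ / (1 + σ)) := by positivity
  rcases hM.eq_or_lt with rfl | hM
  · linarith [nonpos_of_forall_mul_le fun t ht => by simpa using h t ht]
  rcases le_or_gt A 0 with hA | hA
  · linarith
  exact le_two_mul_rpow_mul_rpow_of_forall_mul_sub_le_of_pos hA hM hσ h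

theorem stmt9_general (g g' : ℝ → ℝ) (σ M : ℝ) (hσ : σ ∈ Set.Icc (0:ℝ) 1) (hM : 0 ≤ M)
    (hnonneg : ∀ ζ, 0 ≤ g ζ)
    (hderiv : ∀ ζ, HasDerivAt g (g' ζ) ζ)
    (hHolder : ∀ x y : ℝ, |g' x - g' y| ≤ M * |x - y| ^ σ) :
    ∀ ζ, |g' ζ| ≤ 2 * M ^ (1 / (1 + σ)) * g ζ ^ (σ / (1 + σ)) := fun ζ =>
  le_two_mul_rpow_mul_rpow_of_forall_mul_sub_le hM hσ.1 fun _ ht =>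
    mul_sub_le_of_nonneg_of_holder_deriv hσ.1 hM hnonneg hderiv hHolder ζ ht

/-- interpolation inequality for a nonnegative periodic function with
`σ`-Hölder derivative (Lemma 2.2 of Kiselev–Yao–Zlatoš), where `M` is a bound for
the `C^σ` norm of `g'`. -/
theorem stmt9 (g g' : ℝ → ℝ) (σ M : ℝ) (hσ : σ ∈ Set.Icc (0:ℝ) 1) (hM : 0 ≤ M)
    (hper : Function.Periodic g (2 * Real.pi))
    (hnonneg : ∀ ζ, 0 ≤ g ζ)
    (hderiv : ∀ ζ, HasDerivAt g (g' ζ) ζ)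
    (hbound : ∀ ζ, |g' ζ| ≤ M)
    (hHolder : ∀ x y : ℝ, |g' x - g' y| ≤ M * |x - y| ^ σ) :
    ∀ ζ, |g' ζ| ≤ 2 * M ^ (1 / (1 + σ)) * g ζ ^ (σ / (1 + σ)) :=
  stmt9_general g g' σ M hσ hM hnonneg hderiv hHolder
end

section
/- Let g : ℝ → ℝ be a 2π-periodic positive function in H²(𝕋) and let β ∈ (1,2]. Then there exists a constant C_β > 0 depending only on β such that ∫_𝕋 |g'(μ)|⁴ / g(μ)^β dμ ≤ C_β ‖g‖_{H²}^{4-β}. -/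
open Set Filter Topology MeasureTheory
open scoped Interval

/-!
With `I = ∫ g'⁴ g^(-β)`, write `g'⁴ g^(-β) = g'³ (g^(1-β) / (1-β))'` and integrate by parts over a
period, where the boundary terms cancel: `I = 3/(β-1) ∫ g'² g'' g^(1-β)`. Splitting
`g^(1-β) = g^(-β/2) g^(1-β/2)` and using `2xy ≤ x² + y²` absorbs half of `I`, so
`I ≤ (3/(β-1))² ∫ g''² g^(2-β)`. As `2 - β ≥ 0`, the weight is at most `(sup g)^(2-β)`, and on an
interval of length at least one, `sup g ≤ 2 ‖g‖_{H²}` (compare `g²` with its minimum through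
`|(g²)'| ≤ g² + g'²`).
-/

open intervalIntegral in
theorem sq_le_two_mul_integral_sq_add_sq_deriv {f f' : ℝ → ℝ} {a b : ℝ} (hab : 1 ≤ b - a)
    (hf : ∀ x, HasDerivAt f (f' x) x) (hf' : Continuous f') {y : ℝ} (hy : y ∈ Icc a b) :
    f y ^ 2 ≤ 2 * ∫ x in a..b, f x ^ 2 + f' x ^ 2 := by
  have hle : a ≤ b := by linarith
  have hfc : Continuous f := continuous_iff_continuousAt.2 fun x => (hf x).continuousAt
  set E : ℝ → ℝ := fun x => f x ^ 2 + f' x ^ 2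
  have hE : Continuous E := by fun_prop
  obtain ⟨x, hx, hmin⟩ :=
    isCompact_Icc.exists_isMinOn (nonempty_Icc.2 hle) (hfc.pow 2).continuousOn
  have hx_le : f x ^ 2 ≤ ∫ t in a..b, E t :=
    calc f x ^ 2 ≤ (b - a) * f x ^ 2 := le_mul_of_one_le_left (sq_nonneg _) hab
      _ = ∫ _ in a..b, f x ^ 2 := by simp
      _ ≤ ∫ t in a..b, E t :=
        integral_mono_on hle intervalIntegrable_const (hE.intervalIntegrable a b) fun t ht =>
          (hmin ht).trans (le_add_of_nonneg_right (sq_nonneg _))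
  have hftc : ∫ t in x..y, 2 * f t * f' t = f y ^ 2 - f x ^ 2 :=
    integral_eq_sub_of_hasDerivAt (fun t _ => by simpa using (hf t).pow 2)
      ((by fun_prop : Continuous fun t => 2 * f t * f' t).intervalIntegrable x y)
  have hxy : f y ^ 2 - f x ^ 2 ≤ ∫ t in a..b, E t :=
    calc f y ^ 2 - f x ^ 2 ≤ ‖∫ t in x..y, 2 * f t * f' t‖ := hftc ▸ le_abs_self _
      _ ≤ ∫ t in Ι x y, ‖2 * f t * f' t‖ := norm_integral_le_integral_norm_uIoc
      _ ≤ ∫ t in Ι x y, E t :=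
        setIntegral_mono_on (Continuous.integrableOn_uIoc (by fun_prop)) hE.integrableOn_uIoc
          measurableSet_uIoc fun t _ => by
            rw [Real.norm_eq_abs, abs_le]
            constructor <;> nlinarith [sq_nonneg (f t + f' t), sq_nonneg (f t - f' t)]
      _ ≤ ∫ t in Ioc a b, E t :=
        setIntegral_mono_set hE.integrableOn_Ioc (Eventually.of_forall fun t => by positivity)
          (Ioc_subset_Ioc (le_min hx.1 hy.1) (max_le hx.2 hy.2)).eventuallyLE
      _ = ∫ t in a..b, E t := (integral_of_le hle).symm
  linarith

theorem Function.Periodic.of_hasDerivAt {g g' : ℝ → ℝ} {T : ℝ} (hper : Function.Periodic g T)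
    (hg : ∀ x, HasDerivAt g (g' x) x) : Function.Periodic g' T := fun x => by
  have hshift := (hg (x + T)).comp_add_const x T
  rw [show (fun y => g (y + T)) = g from funext hper] at hshift
  exact hshift.unique (hg x)

theorem integral_deriv_pow_four_mul_rpow_neg_eq {g g' g'' : ℝ → ℝ} {T β : ℝ} (hβ : β ≠ 1)
    (hper : Function.Periodic g T) (hpos : ∀ x, 0 < g x)
    (hg : ∀ x, HasDerivAt g (g' x) x) (hg' : ∀ x, HasDerivAt g' (g'' x) x)
    (hg'' : IntervalIntegrable g'' volume 0 T) :
    ∫ x in (0)..T, g' x ^ 4 * g x ^ (-β) =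
      3 / (β - 1) * ∫ x in (0)..T, g' x ^ 2 * g'' x * g x ^ (1 - β) := by
  have hβ' : 1 - β ≠ 0 := sub_ne_zero.2 hβ.symm
  have hgc : Continuous g := continuous_iff_continuousAt.2 fun x => (hg x).continuousAt
  have hg'c : Continuous g' := continuous_iff_continuousAt.2 fun x => (hg' x).continuousAt
  have hcube : ∀ x, HasDerivAt (fun y => g' y ^ 3) (3 * g' x ^ 2 * g'' x) x := fun x =>
    ((hg' x).fun_pow 3).congr_deriv (by norm_num)
  have hrpow : ∀ x, HasDerivAt (fun y => g y ^ (1 - β) / (1 - β)) (g x ^ (-β) * g' x) x :=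
    fun x => by
      refine (((hg x).rpow_const (Or.inl (hpos x).ne')).div_const (1 - β)).congr_deriv ?_
      rw [sub_sub_cancel_left]
      field_simp
  have hrpc : ∀ p : ℝ, Continuous fun x => g x ^ p := fun p =>
    hgc.rpow_const fun x => Or.inl (hpos x).ne'
  have hIBP := intervalIntegral.integral_mul_deriv_eq_deriv_mul (fun x _ => hcube x)
    (fun x _ => hrpow x) (hg''.continuousOn_mul (by fun_prop))
    (((hrpc (-β)).mul hg'c).intervalIntegrable 0 T)
  have hT : g T = g 0 := by simpa using hper 0
  have hT' : g' T = g' 0 := by simpa using hper.of_hasDerivAt hg 0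
  rw [hT, hT', sub_self, zero_sub] at hIBP
  calc ∫ x in (0)..T, g' x ^ 4 * g x ^ (-β)
      = ∫ x in (0)..T, g' x ^ 3 * (g x ^ (-β) * g' x) :=
        intervalIntegral.integral_congr fun x _ => by ring
    _ = -∫ x in (0)..T, 3 * g' x ^ 2 * g'' x * (g x ^ (1 - β) / (1 - β)) := hIBP
    _ = 3 / (β - 1) * ∫ x in (0)..T, g' x ^ 2 * g'' x * g x ^ (1 - β) := by
        rw [← intervalIntegral.integral_neg, ← intervalIntegral.integral_const_mul]
        refine intervalIntegral.integral_congr fun x _ => ?_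
        field_simp
        ring

theorem IntervalIntegrable.of_sq {f : ℝ → ℝ} {a b : ℝ} (hf : AEStronglyMeasurable f)
    (h : IntervalIntegrable (fun x => f x ^ 2) volume a b) : IntervalIntegrable f volume a b := by
  rw [intervalIntegrable_iff, uIoc] at h ⊢
  exact ((memLp_two_iff_integrable_sq hf.restrict).2 h).integrable one_le_two

theorem two_mul_le_add_sq_rpow {t : ℝ} (ht : 0 < t) (β c u v : ℝ) :
    2 * c * (u ^ 2 * v * t ^ (1 - β)) ≤ u ^ 4 * t ^ (-β) + c ^ 2 * (v ^ 2 * t ^ (2 - β)) := by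
  have hsq : ∀ p : ℝ, (t ^ (p / 2)) ^ 2 = t ^ p := fun p => by
    rw [← Real.rpow_natCast, ← Real.rpow_mul ht.le]; norm_num
  have hmul : t ^ (-β / 2) * t ^ ((2 - β) / 2) = t ^ (1 - β) := by
    rw [← Real.rpow_add ht]; ring_nf
  calc 2 * c * (u ^ 2 * v * t ^ (1 - β))
      = 2 * (u ^ 2 * t ^ (-β / 2)) * (c * v * t ^ ((2 - β) / 2)) := by rw [← hmul]; ring
    _ ≤ (u ^ 2 * t ^ (-β / 2)) ^ 2 + (c * v * t ^ ((2 - β) / 2)) ^ 2 := two_mul_le_add_sq _ _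
    _ = u ^ 4 * t ^ (-β) + c ^ 2 * (v ^ 2 * t ^ (2 - β)) := by
      rw [mul_pow, mul_pow, hsq, hsq]; ring

open intervalIntegral in
theorem integral_abs_deriv_pow_four_div_rpow_le {g g' g'' : ℝ → ℝ} {T β : ℝ} (hT : 0 ≤ T)
    (hβ : 1 < β) (hper : Function.Periodic g T) (hpos : ∀ x, 0 < g x)
    (hg : ∀ x, HasDerivAt g (g' x) x) (hg' : ∀ x, HasDerivAt g' (g'' x) x)
    (hg''2 : IntervalIntegrable (fun x => g'' x ^ 2) volume 0 T) :
    ∫ x in (0)..T, |g' x| ^ 4 / g x ^ β ≤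
      (3 / (β - 1)) ^ 2 * ∫ x in (0)..T, g'' x ^ 2 * g x ^ (2 - β) := by
  set c := 3 / (β - 1)
  have hgc : Continuous g := continuous_iff_continuousAt.2 fun x => (hg x).continuousAt
  have hg'c : Continuous g' := continuous_iff_continuousAt.2 fun x => (hg' x).continuousAt
  have hrpc : ∀ p : ℝ, Continuous fun x => g x ^ p := fun p =>
    hgc.rpow_const fun x => Or.inl (hpos x).ne'
  have hg'' : IntervalIntegrable g'' volume 0 T := by
    refine hg''2.of_sq ?_
    rw [show g'' = deriv g' from funext fun x => (hg' x).deriv.symm]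
    exact (measurable_deriv g').aestronglyMeasurable
  have hI : IntervalIntegrable (fun x => g' x ^ 4 * g x ^ (-β)) volume 0 T :=
    ((hg'c.pow 4).mul (hrpc _)).intervalIntegrable 0 T
  have hJ : IntervalIntegrable (fun x => g' x ^ 2 * g'' x * g x ^ (1 - β)) volume 0 T :=
    (hg''.continuousOn_mul (hg'c.pow 2).continuousOn).mul_continuousOn (hrpc _).continuousOn
  have hK : IntervalIntegrable (fun x => g'' x ^ 2 * g x ^ (2 - β)) volume 0 T :=
    hg''2.mul_continuousOn (hrpc _).continuousOn
  have hIBP := integral_deriv_pow_four_mul_rpow_neg_eq hβ.ne' hper hpos hg hg' hg''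
  have hyoung := integral_mono_on hT (hJ.const_mul (2 * c)) (hI.add (hK.const_mul (c ^ 2)))
    fun x _ => two_mul_le_add_sq_rpow (hpos x) β c (g' x) (g'' x)
  rw [intervalIntegral.integral_const_mul, integral_add hI (hK.const_mul _),
    intervalIntegral.integral_const_mul] at hyoung
  calc ∫ x in (0)..T, |g' x| ^ 4 / g x ^ β = ∫ x in (0)..T, g' x ^ 4 * g x ^ (-β) :=
        integral_congr fun x _ => by
          rw [(by decide : Even 4).pow_abs, Real.rpow_neg (hpos x).le, div_eq_mul_inv]
    _ ≤ c ^ 2 * ∫ x in (0)..T, g'' x ^ 2 * g x ^ (2 - β) := by linarith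

theorem integral_mul_rpow_le_of_le {h g : ℝ → ℝ} {a b p M : ℝ} (hab : a ≤ b) (hp : 0 ≤ p)
    (hh : IntervalIntegrable h volume a b) (hh0 : ∀ x ∈ Icc a b, 0 ≤ h x)
    (hg : ContinuousOn g (Icc a b)) (hg0 : ∀ x ∈ Icc a b, 0 ≤ g x)
    (hgM : ∀ x ∈ Icc a b, g x ≤ M) :
    ∫ x in a..b, h x * g x ^ p ≤ M ^ p * ∫ x in a..b, h x := by
  have hgp : ContinuousOn (fun x => g x ^ p) (uIcc a b) := by
    rw [uIcc_of_le hab]; exact hg.rpow_const fun _ _ => Or.inr hp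
  rw [← intervalIntegral.integral_const_mul]
  refine intervalIntegral.integral_mono_on hab (hh.mul_continuousOn hgp) (hh.const_mul _)
    fun x hx => ?_
  rw [mul_comm]
  exact mul_le_mul_of_nonneg_right (Real.rpow_le_rpow (hg0 x hx) (hgM x hx) hp) (hh0 x hx)

theorem le_two_mul_sqrt_integral_sq_add_sq_add_sq {f f' f'' : ℝ → ℝ} {a b : ℝ}
    (hab : 1 ≤ b - a) (hf : ∀ x, HasDerivAt f (f' x) x) (hf' : Continuous f')
    (hf'' : IntervalIntegrable (fun x => f'' x ^ 2) volume a b) {y : ℝ} (hy : y ∈ Icc a b) :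
    f y ≤ 2 * √(∫ x in a..b, f x ^ 2 + f' x ^ 2 + f'' x ^ 2) := by
  have hle : a ≤ b := by linarith
  have hfc : Continuous f := continuous_iff_continuousAt.2 fun x => (hf x).continuousAt
  have hE : IntervalIntegrable (fun x => f x ^ 2 + f' x ^ 2) volume a b :=
    (by fun_prop : Continuous fun x => f x ^ 2 + f' x ^ 2).intervalIntegrable _ _
  have hmono : ∫ x in a..b, f x ^ 2 + f' x ^ 2 ≤ ∫ x in a..b, f x ^ 2 + f' x ^ 2 + f'' x ^ 2 :=
    intervalIntegral.integral_mono_on hle hE (hE.add hf'') fun x _ =>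
      le_add_of_nonneg_right (sq_nonneg _)
  have hS : 0 ≤ ∫ x in a..b, f x ^ 2 + f' x ^ 2 + f'' x ^ 2 :=
    intervalIntegral.integral_nonneg hle fun x _ => by positivity
  refine le_of_pow_le_pow_left₀ two_ne_zero (by positivity) ?_
  rw [mul_pow, Real.sq_sqrt hS]
  linarith [sq_le_two_mul_integral_sq_add_sq_deriv hab hf hf' hy]

theorem integral_sq_le_sq_sqrt_integral_sq_add_sq_add_sq {f f' f'' : ℝ → ℝ} {a b : ℝ}
    (hab : a ≤ b) (hf : Continuous f) (hf' : Continuous f')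
    (hf'' : IntervalIntegrable (fun x => f'' x ^ 2) volume a b) :
    ∫ x in a..b, f'' x ^ 2 ≤ √(∫ x in a..b, f x ^ 2 + f' x ^ 2 + f'' x ^ 2) ^ 2 := by
  rw [Real.sq_sqrt (intervalIntegral.integral_nonneg hab fun x _ => by positivity)]
  refine intervalIntegral.integral_mono_on hab hf''
    (((by fun_prop : Continuous fun x => f x ^ 2 + f' x ^ 2).intervalIntegrable _ _).add hf'')
    fun x _ => le_add_of_nonneg_left (by positivity)

theorem two_mul_rpow_mul_sq_le {N β : ℝ} (hN : 0 ≤ N) (hβ : 0 ≤ β) (hβ₄ : β ≠ 4) :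
    (2 * N) ^ (2 - β) * N ^ 2 ≤ 4 * N ^ (4 - β) := by
  have htwo : (2 : ℝ) ^ (2 - β) ≤ 4 := by
    calc (2 : ℝ) ^ (2 - β) ≤ 2 ^ (2 : ℝ) :=
          Real.rpow_le_rpow_of_exponent_le one_le_two (by linarith)
      _ = 4 := by norm_num
  calc (2 * N) ^ (2 - β) * N ^ 2 = 2 ^ (2 - β) * (N ^ (2 - β) * N ^ (2 : ℝ)) := by
        rw [Real.mul_rpow zero_le_two hN, Real.rpow_two]; ring
    _ = 2 ^ (2 - β) * N ^ (4 - β) := by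
        rw [← Real.rpow_add' hN (by contrapose! hβ₄; linarith)]; ring_nf
    _ ≤ 4 * N ^ (4 - β) := by gcongr

/-- weighted estimate
`∫ |g'|⁴ / g^β ≤ C_β ‖g‖_{H²}^{4-β}` for positive `2π`-periodic `g ∈ H²`
(Lemma 7 of Gancedo–Patel). -/
theorem stmt10 (β : ℝ) (hβ : β ∈ Set.Ioc (1:ℝ) 2) :
    ∃ C > (0:ℝ), ∀ g g' g'' : ℝ → ℝ,
      Function.Periodic g (2 * Real.pi) →
      (∀ μ, 0 < g μ) →
      (∀ μ, HasDerivAt g (g' μ) μ) →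
      (∀ μ, HasDerivAt g' (g'' μ) μ) →
      IntervalIntegrable (fun μ => g'' μ ^ 2) volume 0 (2 * Real.pi) →
      (∫ μ in (0:ℝ)..(2 * Real.pi), |g' μ| ^ 4 / g μ ^ β) ≤
        C * Real.sqrt (∫ μ in (0:ℝ)..(2 * Real.pi),
            g μ ^ 2 + g' μ ^ 2 + g'' μ ^ 2) ^ (4 - β) := by
  obtain ⟨hβ₁, hβ₂⟩ := hβ
  refine ⟨4 * (3 / (β - 1)) ^ 2, by positivity, fun g g' g'' hper hpos hg hg' hg''2 => ?_⟩
  have hlen : 1 ≤ 2 * Real.pi - 0 := by linarith [Real.pi_gt_three]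
  have hT : 0 ≤ 2 * Real.pi := by positivity
  have hgc : Continuous g := continuous_iff_continuousAt.2 fun x => (hg x).continuousAt
  have hg'c : Continuous g' := continuous_iff_continuousAt.2 fun x => (hg' x).continuousAt
  set N := √(∫ x in (0:ℝ)..(2 * Real.pi), g x ^ 2 + g' x ^ 2 + g'' x ^ 2)
  calc ∫ x in (0:ℝ)..(2 * Real.pi), |g' x| ^ 4 / g x ^ β
      ≤ (3 / (β - 1)) ^ 2 * ∫ x in (0:ℝ)..(2 * Real.pi), g'' x ^ 2 * g x ^ (2 - β) :=
        integral_abs_deriv_pow_four_div_rpow_le hT hβ₁ hper hpos hg hg' hg''2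
    _ ≤ (3 / (β - 1)) ^ 2 * ((2 * N) ^ (2 - β) * ∫ x in (0:ℝ)..(2 * Real.pi), g'' x ^ 2) := by
        gcongr
        exact integral_mul_rpow_le_of_le hT (by linarith) hg''2 (fun x _ => sq_nonneg _)
          hgc.continuousOn (fun x _ => (hpos x).le)
          fun x hx => le_two_mul_sqrt_integral_sq_add_sq_add_sq hlen hg hg'c hg''2 hx
    _ ≤ (3 / (β - 1)) ^ 2 * ((2 * N) ^ (2 - β) * N ^ 2) := by
        gcongr
        exact integral_sq_le_sq_sqrt_integral_sq_add_sq_add_sq hT hgc hg'c hg''2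
    _ ≤ (3 / (β - 1)) ^ 2 * (4 * N ^ (4 - β)) := mul_le_mul_of_nonneg_left
        (two_mul_rpow_mul_sq_le (Real.sqrt_nonneg _) (by linarith) (by linarith : β < 4).ne)
        (sq_nonneg _)
    _ = 4 * (3 / (β - 1)) ^ 2 * N ^ (4 - β) := by ring
end

section
/- Let G : (0,∞) → ℝ be positive on (0, c₀) with ρ ↦ G(ρ)/ρ non-increasing on (0, c₀). For x, y ∈ (0,∞)² with |x+y| ≤ c₀ and ỹ = (-y₁, y₂), define K₁₁(x,y) = (y₂-x₂)/|x-y|² · G(|x-y|) and K₁₂(x,y) = (y₂-x₂)/|x-ỹ|² · G(|x-ỹ|). Then sgn(y₂ - x₂) · (K₁₁(x,y) - K₁₂(x,y)) ≥ 0. -/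
open Set Filter Topology

/-- Euclidean norm on `ℝ × ℝ`. -/
noncomputable def enorm2 (p : ℝ × ℝ) : ℝ := Real.sqrt (p.1 ^ 2 + p.2 ^ 2)

/-- sign condition `sgn(y₂ - x₂) · (K₁₁ - K₁₂) ≥ 0` for points in the
open first quadrant with `|x + y| ≤ c₀`. -/
theorem stmt12 (G : ℝ → ℝ) (c₀ : ℝ) (hc₀ : 0 < c₀)
    (hGpos : ∀ ρ ∈ Set.Ioo (0:ℝ) c₀, 0 < G ρ)
    (hGmono : AntitoneOn (fun ρ => G ρ / ρ) (Set.Ioo 0 c₀))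
    (x y : ℝ × ℝ) (hx1 : 0 < x.1) (hx2 : 0 < x.2) (hy1 : 0 < y.1) (hy2 : 0 < y.2)
    (hxy : enorm2 (x + y) ≤ c₀) :
    0 ≤ Real.sign (y.2 - x.2) *
      ((y.2 - x.2) / enorm2 (x - y) ^ 2 * G (enorm2 (x - y)) -
       (y.2 - x.2) / enorm2 (x - (-y.1, y.2)) ^ 2 * G (enorm2 (x - (-y.1, y.2)))) := by
  rcases eq_or_ne y.2 x.2 with h | h
  · simp [h, Real.sign_zero]
  set a := enorm2 (x - y) with ha_def
  set b := enorm2 (x - (-y.1, y.2)) with hb_def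
  set t := y.2 - x.2 with ht_def
  have ht : t ≠ 0 := sub_ne_zero.mpr h
  have ha : a = Real.sqrt ((x.1 - y.1) ^ 2 + (x.2 - y.2) ^ 2) := by
    simp [ha_def, enorm2]
  have hb : b = Real.sqrt ((x.1 + y.1) ^ 2 + (x.2 - y.2) ^ 2) := by
    simp [hb_def, enorm2]
  have ht2 : 0 < (x.2 - y.2) ^ 2 := by
    have : x.2 - y.2 ≠ 0 := fun hc => h (by linarith [sub_eq_zero.mp hc])
    positivity
  have ha_pos : 0 < a := by
    rw [ha]; apply Real.sqrt_pos.mpr; positivity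
  have hb_pos : 0 < b := by
    rw [hb]; apply Real.sqrt_pos.mpr; positivity
  have hab : a ≤ b := by
    rw [ha, hb]
    apply Real.sqrt_le_sqrt
    nlinarith [mul_pos hx1 hy1]
  have hbc : b < c₀ := by
    have hxy2 : (x.1 + y.1) ^ 2 + (x.2 + y.2) ^ 2 ≤ c₀ ^ 2 := by
      have : enorm2 (x + y) = Real.sqrt ((x.1 + y.1) ^ 2 + (x.2 + y.2) ^ 2) := by
        simp [enorm2]
      rw [this] at hxy
      have := Real.sqrt_le_sqrt (le_of_eq (Real.sq_sqrt (by positivity :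
        (0:ℝ) ≤ (x.1 + y.1) ^ 2 + (x.2 + y.2) ^ 2)).symm)
      nlinarith [Real.sq_sqrt (by positivity : (0:ℝ) ≤ (x.1 + y.1) ^ 2 + (x.2 + y.2) ^ 2),
        Real.sqrt_nonneg ((x.1 + y.1) ^ 2 + (x.2 + y.2) ^ 2)]
    have hb2 : b ^ 2 < c₀ ^ 2 := by
      rw [hb, Real.sq_sqrt (by positivity)]
      nlinarith [mul_pos hx2 hy2]
    nlinarith [hb_pos]
  have hac : a < c₀ := lt_of_le_of_lt hab hbc
  have haI : a ∈ Set.Ioo (0:ℝ) c₀ := ⟨ha_pos, hac⟩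
  have hbI : b ∈ Set.Ioo (0:ℝ) c₀ := ⟨hb_pos, hbc⟩
  have key : G b / b ≤ G a / a := hGmono haI hbI hab
  have hGa : 0 < G a := hGpos a haI
  have hGb : 0 < G b := hGpos b hbI
  have key' : G b * a ≤ G a * b := by
    rw [div_le_div_iff₀ hb_pos ha_pos] at key
    linarith
  have ineq : G b / b ^ 2 ≤ G a / a ^ 2 := by
    rw [div_le_div_iff₀ (by positivity) (by positivity)]
    nlinarith [mul_le_mul_of_nonneg_right key' ha_pos.le, mul_pos hGa hb_pos, hab]
  have hst : 0 < Real.sign t * t := by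
    rcases ht.lt_or_gt with hlt | hgt
    · rw [Real.sign_of_neg hlt]; linarith
    · rw [Real.sign_of_pos hgt]; linarith
  have hre : Real.sign t * (t / a ^ 2 * G a - t / b ^ 2 * G b)
      = (Real.sign t * t) * (G a / a ^ 2 - G b / b ^ 2) := by ring
  rw [hre]
  exact mul_nonneg hst.le (sub_nonneg.mpr ineq)
end

section
/- Let 𝒢 : (0, c₀) → ℝ be a positive C¹ function satisfying lim_{ρ→0⁺} ρ · log(1/ρ) · (-𝒢'(ρ))/𝒢(ρ) = γ for some γ ≥ 0. Then for every ε > 0 there exist constants C_ε > 0 and ρ_ε ∈ (0, min(c₀,1)) such that 𝒢(ρ) ≤ C_ε (log(1/ρ))^{γ+ε} for all ρ ∈ (0, ρ_ε]. -/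
/-!
If `ρ log(1/ρ) (-𝒢'(ρ)) / 𝒢(ρ) < γ + ε` near `0`, the quotient `𝒢(ρ) / (log(1/ρ))^(γ+ε)` has
positive derivative there, so it is increasing on some `(0, ρ_ε]` and hence bounded by its value
at `ρ_ε`.
-/

open Set Filter Topology Real

theorem hasDerivAt_div_log_one_div_rpow {G : ℝ → ℝ} {g a ρ : ℝ} (hρ0 : 0 < ρ) (hρ1 : ρ < 1)
    (hG : HasDerivAt G g ρ) :
    HasDerivAt (fun x => G x / log (1 / x) ^ a)
      ((a * G ρ - ρ * log (1 / ρ) * -g) / (ρ * log (1 / ρ) ^ (a + 1))) ρ := by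
  have hL : 0 < log (1 / ρ) := log_pos (one_lt_one_div hρ0 hρ1)
  have hlog : HasDerivAt (fun x => log (1 / x)) (-ρ⁻¹) ρ := by
    have h : (fun x : ℝ => log (1 / x)) = fun x => -log x := funext fun x => by rw [one_div, log_inv]
    exact h ▸ (hasDerivAt_log hρ0.ne').neg
  refine (hG.div (hlog.rpow_const (Or.inl hL.ne')) (rpow_pos_of_pos hL a).ne').congr_deriv ?_
  rw [rpow_sub_one hL.ne', rpow_add_one hL.ne']
  have hLa := (rpow_pos_of_pos hL a).ne'
  field_simp
  ring

theorem monotoneOn_div_log_one_div_rpow {G G' : ℝ → ℝ} {a r : ℝ} (hr : r < 1)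
    (hG : ∀ ρ ∈ Ioc 0 r, HasDerivAt G (G' ρ) ρ)
    (hG' : ∀ ρ ∈ Ioo 0 r, ρ * log (1 / ρ) * -G' ρ ≤ a * G ρ) :
    MonotoneOn (fun ρ => G ρ / log (1 / ρ) ^ a) (Ioc 0 r) := by
  set φ' := fun ρ => (a * G ρ - ρ * log (1 / ρ) * -G' ρ) / (ρ * log (1 / ρ) ^ (a + 1))
  have hderiv : ∀ ρ ∈ Ioc 0 r, HasDerivAt (fun x => G x / log (1 / x) ^ a) (φ' ρ) ρ :=
    fun ρ hρ => hasDerivAt_div_log_one_div_rpow hρ.1 (hρ.2.trans_lt hr) (hG ρ hρ)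
  refine monotoneOn_of_hasDerivWithinAt_nonneg (f' := φ') (convex_Ioc 0 r)
    (fun ρ hρ => (hderiv ρ hρ).continuousAt.continuousWithinAt) ?_ ?_
  · rw [interior_Ioc]
    exact fun ρ hρ => (hderiv ρ (Ioo_subset_Ioc_self hρ)).hasDerivWithinAt
  · rw [interior_Ioc]
    intro ρ hρ
    have hL : 0 < log (1 / ρ) := log_pos (one_lt_one_div hρ.1 (hρ.2.trans hr))
    exact div_nonneg (sub_nonneg.2 (hG' ρ hρ)) (mul_pos hρ.1 (rpow_pos_of_pos hL _)).le

theorem le_mul_log_one_div_rpow {G G' : ℝ → ℝ} {a r : ℝ} (hr : r < 1)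
    (hG : ∀ ρ ∈ Ioc 0 r, HasDerivAt G (G' ρ) ρ)
    (hG' : ∀ ρ ∈ Ioo 0 r, ρ * log (1 / ρ) * -G' ρ ≤ a * G ρ) :
    ∀ ρ ∈ Ioc 0 r, G ρ ≤ G r / log (1 / r) ^ a * log (1 / ρ) ^ a := by
  intro ρ hρ
  have hL : 0 < log (1 / ρ) := log_pos (one_lt_one_div hρ.1 (hρ.2.trans_lt hr))
  rw [← div_le_iff₀ (by positivity)]
  exact monotoneOn_div_log_one_div_rpow hr hG hG' hρ ⟨hρ.1.trans_le hρ.2, le_rfl⟩ hρ.2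

theorem stmt13_general (𝒢 𝒢' : ℝ → ℝ) (c₀ γ : ℝ) (hc₀ : 0 < c₀)
    (hderiv : ∀ ρ ∈ Set.Ioo (0:ℝ) c₀, HasDerivAt 𝒢 (𝒢' ρ) ρ)
    (hpos : ∀ ρ ∈ Set.Ioo (0:ℝ) c₀, 0 < 𝒢 ρ)
    (hlim : Tendsto (fun ρ => ρ * Real.log (1 / ρ) * (-𝒢' ρ) / 𝒢 ρ) (𝓝[>] 0) (𝓝 γ)) :
    ∀ ε > (0:ℝ), ∃ Cε > (0:ℝ), ∃ ρε ∈ Set.Ioo (0:ℝ) (min c₀ 1),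
      ∀ ρ ∈ Set.Ioc (0:ℝ) ρε, 𝒢 ρ ≤ Cε * Real.log (1 / ρ) ^ (γ + ε) := by
  intro ε hε
  obtain ⟨δ, hδ, hratio⟩ := mem_nhdsGT_iff_exists_Ioo_subset.1
    (hlim.eventually_lt_const (lt_add_of_pos_right γ hε))
  have hm : 0 < min δ (min c₀ 1) := lt_min hδ (lt_min hc₀ one_pos)
  set r := min δ (min c₀ 1) / 2
  have hr0 : 0 < r := half_pos hm
  have hrδ : r < δ := (half_lt_self hm).trans_le (min_le_left _ _)
  have hrc : r < min c₀ 1 := (half_lt_self hm).trans_le (min_le_right _ _)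
  have hr1 : r < 1 := hrc.trans_le (min_le_right _ _)
  have hsub : Ioc 0 r ⊆ Ioo 0 c₀ :=
    fun ρ hρ => ⟨hρ.1, hρ.2.trans_lt (hrc.trans_le (min_le_left _ _))⟩
  have hL : 0 < log (1 / r) := log_pos (one_lt_one_div hr0 hr1)
  refine ⟨𝒢 r / log (1 / r) ^ (γ + ε), ?_, r, ⟨hr0, hrc⟩,
    le_mul_log_one_div_rpow hr1 (fun ρ hρ => hderiv ρ (hsub hρ)) fun ρ hρ => ?_⟩
  · have := hpos r (hsub ⟨hr0, le_rfl⟩)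
    positivity
  · have hρc₀ := hsub (Ioo_subset_Ioc_self hρ)
    exact ((div_lt_iff₀ (hpos ρ hρc₀)).1 (hratio ⟨hρ.1, hρ.2.trans hrδ⟩)).le

/-- logarithmic upper bound `𝒢(ρ) ≤ C_ε (log(1/ρ))^{γ+ε}` near `0`. -/
theorem stmt13 (𝒢 𝒢' : ℝ → ℝ) (c₀ γ : ℝ) (hc₀ : 0 < c₀) (hγ : 0 ≤ γ)
    (hderiv : ∀ ρ ∈ Set.Ioo (0:ℝ) c₀, HasDerivAt 𝒢 (𝒢' ρ) ρ)
    (hcont : ContinuousOn 𝒢' (Set.Ioo 0 c₀))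
    (hpos : ∀ ρ ∈ Set.Ioo (0:ℝ) c₀, 0 < 𝒢 ρ)
    (hlim : Tendsto (fun ρ => ρ * Real.log (1 / ρ) * (-𝒢' ρ) / 𝒢 ρ) (𝓝[>] 0) (𝓝 γ)) :
    ∀ ε > (0:ℝ), ∃ Cε > (0:ℝ), ∃ ρε ∈ Set.Ioo (0:ℝ) (min c₀ 1),
      ∀ ρ ∈ Set.Ioc (0:ℝ) ρε, 𝒢 ρ ≤ Cε * Real.log (1 / ρ) ^ (γ + ε) :=
  stmt13_general 𝒢 𝒢' c₀ γ hc₀ hderiv hpos hlim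
end

section
/- Let 𝒢 : (0, c₀) → ℝ be positive and C¹ with lim_{ρ→0⁺} 𝒢(ρ) = +∞ and lim_{ρ→0⁺} ρ log(1/ρ)(-𝒢'(ρ))/𝒢(ρ) = γ for some finite γ ≥ 0. Then lim_{ρ→0⁺} (∫₀^ρ 𝒢(s) ds)/(ρ 𝒢(ρ)) = 1. -/
/-!
Since `log (1/ρ) → ∞`, the hypothesis forces the elasticity `ρ 𝒢'(ρ) / 𝒢(ρ)` to tend to `0`.
Once it exceeds `-1/2`, the function `√ρ 𝒢(ρ)` is increasing, so `𝒢(ρ) = O(ρ^{-1/2})`: hence `𝒢`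
is integrable at `0` and `ρ 𝒢(ρ) → 0`. L'Hôpital's rule then reduces the quotient to
`𝒢 / (ρ 𝒢)' = 1 / (1 + ρ 𝒢'/𝒢) → 1`.
-/

open Set Filter Topology MeasureTheory

lemma tendsto_zero_of_tendsto_log_inv_mul {f : ℝ → ℝ} {γ : ℝ}
    (h : Tendsto (fun x => Real.log (1 / x) * f x) (𝓝[>] 0) (𝓝 γ)) :
    Tendsto f (𝓝[>] 0) (𝓝 0) := by
  have hlog : Tendsto (fun x : ℝ => Real.log (1 / x)) (𝓝[>] 0) atTop := by
    simpa only [one_div, Real.log_inv, Function.comp_def] using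
      tendsto_neg_atBot_atTop.comp Real.tendsto_log_nhdsGT_zero
  have hprod := h.mul hlog.inv_tendsto_atTop
  rw [mul_zero] at hprod
  refine hprod.congr' ?_
  filter_upwards [Ioo_mem_nhdsGT_of_mem (show (0 : ℝ) ∈ Ico 0 1 by norm_num)] with x hx
  have hlog_ne : Real.log (1 / x) ≠ 0 := by
    rw [one_div, Real.log_inv, neg_ne_zero]
    exact (Real.log_neg hx.1 hx.2).ne
  simp only [Pi.inv_apply]
  field_simp

lemma integrableOn_Ioc_of_abs_le_mul_rpow {G : ℝ → ℝ} {b C r : ℝ} (hr : -1 < r)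
    (hcont : ContinuousOn G (Ioc 0 b)) (hbound : ∀ x ∈ Ioc 0 b, |G x| ≤ C * x ^ r) :
    IntegrableOn G (Ioc 0 b) :=
  Integrable.mono' ((intervalIntegral.intervalIntegrable_rpow' hr).const_mul C).1
    (hcont.aestronglyMeasurable measurableSet_Ioc)
    (ae_restrict_of_forall_mem measurableSet_Ioc hbound)

lemma tendsto_integral_nhdsGT_zero {G : ℝ → ℝ} {b : ℝ} (hb : 0 < b)
    (hG : IntegrableOn G (Ioc 0 b)) :
    Tendsto (fun x => ∫ s in (0 : ℝ)..x, G s) (𝓝[>] 0) (𝓝 0) := by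
  have hint : IntervalIntegrable G volume 0 b :=
    (intervalIntegrable_iff_integrableOn_Ioc_of_le hb.le).2 hG
  have hcont :=
    intervalIntegral.continuousOn_primitive_interval' hint left_mem_uIcc 0 left_mem_uIcc
  have hmem : uIcc 0 b ∈ 𝓝[>] (0 : ℝ) := by
    rw [uIcc_of_le hb.le]
    exact mem_of_superset (Ioo_mem_nhdsGT_of_mem ⟨le_rfl, hb⟩) Ioo_subset_Icc_self
  simpa using (hcont.mono_of_mem_nhdsWithin hmem).tendsto

section Elasticity

variable {G G' : ℝ → ℝ} {c : ℝ}

lemma monotoneOn_sqrt_mul_of_elasticity (hderiv : ∀ x ∈ Ioo 0 c, HasDerivAt G (G' x) x)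
    (hpos : ∀ x ∈ Ioo 0 c, 0 < G x) (hel : ∀ x ∈ Ioo 0 c, -(1 / 2) < x * G' x / G x) :
    MonotoneOn (fun x => √x * G x) (Ioo 0 c) := by
  have hd : ∀ x ∈ Ioo 0 c,
      HasDerivAt (fun x => √x * G x) (1 / (2 * √x) * G x + √x * G' x) x :=
    fun x hx => (Real.hasDerivAt_sqrt hx.1.ne').mul (hderiv x hx)
  refine monotoneOn_of_hasDerivWithinAt_nonneg (f' := fun x => 1 / (2 * √x) * G x + √x * G' x)
    (convex_Ioo 0 c)
    (fun x hx => (hd x hx).continuousAt.continuousWithinAt) ?_ ?_ <;> rw [interior_Ioo]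
  · exact fun x hx => (hd x hx).hasDerivWithinAt
  · intro x hx
    have hsqrt : 0 < √x := Real.sqrt_pos.2 hx.1
    have hGx := hpos x hx
    have hsum : 0 ≤ G x + 2 * (x * G' x) := by
      have := (lt_div_iff₀ hGx).1 (hel x hx); linarith
    have hform : 1 / (2 * √x) * G x + √x * G' x = (G x + 2 * (x * G' x)) / (2 * √x) := by
      field_simp
      rw [Real.sq_sqrt hx.1.le]
      ring
    rw [hform]
    positivity

lemma sqrt_mul_le_of_elasticity (hderiv : ∀ x ∈ Ioo 0 c, HasDerivAt G (G' x) x)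
    (hpos : ∀ x ∈ Ioo 0 c, 0 < G x) (hel : ∀ x ∈ Ioo 0 c, -(1 / 2) < x * G' x / G x)
    {b x : ℝ} (hb : b < c) (hx : x ∈ Ioc 0 b) : √x * G x ≤ √b * G b :=
  monotoneOn_sqrt_mul_of_elasticity hderiv hpos hel ⟨hx.1, hx.2.trans_lt hb⟩
    ⟨hx.1.trans_le hx.2, hb⟩ hx.2

lemma integrableOn_Ioc_of_elasticity (hderiv : ∀ x ∈ Ioo 0 c, HasDerivAt G (G' x) x)
    (hpos : ∀ x ∈ Ioo 0 c, 0 < G x) (hel : ∀ x ∈ Ioo 0 c, -(1 / 2) < x * G' x / G x)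
    {b : ℝ} (hb : b < c) : IntegrableOn G (Ioc 0 b) := by
  refine integrableOn_Ioc_of_abs_le_mul_rpow (C := √b * G b) (r := -(1 / 2)) (by norm_num)
    (fun x hx => (hderiv x ⟨hx.1, hx.2.trans_lt hb⟩).continuousAt.continuousWithinAt)
    fun x hx => ?_
  rw [abs_of_pos (hpos x ⟨hx.1, hx.2.trans_lt hb⟩), Real.rpow_neg hx.1.le, ← Real.sqrt_eq_rpow,
    ← div_eq_mul_inv, le_div_iff₀ (Real.sqrt_pos.2 hx.1), mul_comm]
  exact sqrt_mul_le_of_elasticity hderiv hpos hel hb hx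

lemma tendsto_mul_self_nhdsGT_zero_of_elasticity (hc : 0 < c)
    (hderiv : ∀ x ∈ Ioo 0 c, HasDerivAt G (G' x) x)
    (hpos : ∀ x ∈ Ioo 0 c, 0 < G x) (hel : ∀ x ∈ Ioo 0 c, -(1 / 2) < x * G' x / G x) :
    Tendsto (fun x => x * G x) (𝓝[>] 0) (𝓝 0) := by
  set b := c / 2
  have hb : b ∈ Ioo 0 c := ⟨half_pos hc, half_lt_self hc⟩
  have hsqrt : Tendsto (fun x => √x * (√b * G b)) (𝓝[>] 0) (𝓝 0) := by
    refine (Continuous.tendsto' ?_ 0 0 ?_).mono_left nhdsWithin_le_nhds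
    · fun_prop
    · simp
  refine squeeze_zero' ?_ ?_ hsqrt <;>
    filter_upwards [Ioo_mem_nhdsGT_of_mem ⟨le_rfl, hb.1⟩] with x hx
  · exact mul_nonneg hx.1.le (hpos x ⟨hx.1, hx.2.trans hb.2⟩).le
  · calc x * G x = √x * (√x * G x) := by rw [← mul_assoc, Real.mul_self_sqrt hx.1.le]
      _ ≤ √x * (√b * G b) := mul_le_mul_of_nonneg_left
          (sqrt_mul_le_of_elasticity hderiv hpos hel hb.2 (Ioo_subset_Ioc_self hx))
          (Real.sqrt_nonneg x)

lemma tendsto_integral_div_mul_self_of_elasticity (hc : 0 < c)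
    (hderiv : ∀ x ∈ Ioo 0 c, HasDerivAt G (G' x) x)
    (hpos : ∀ x ∈ Ioo 0 c, 0 < G x) (hel : ∀ x ∈ Ioo 0 c, -(1 / 2) < x * G' x / G x)
    (ht : Tendsto (fun x => x * G' x / G x) (𝓝[>] 0) (𝓝 0)) :
    Tendsto (fun x => (∫ s in (0 : ℝ)..x, G s) / (x * G x)) (𝓝[>] 0) (𝓝 1) := by
  have hGcont : ContinuousOn G (Ioo 0 c) := fun x hx =>
    (hderiv x hx).continuousAt.continuousWithinAt
  have hFderiv : ∀ x ∈ Ioo 0 c, HasDerivAt (fun x => ∫ s in (0 : ℝ)..x, G s) (G x) x :=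
    fun x hx => intervalIntegral.integral_hasDerivAt_right
      ((intervalIntegrable_iff_integrableOn_Ioc_of_le hx.1.le).2
        (integrableOn_Ioc_of_elasticity hderiv hpos hel hx.2))
      (hGcont.stronglyMeasurableAtFilter isOpen_Ioo x hx) (hderiv x hx).continuousAt
  have hgderiv : ∀ x ∈ Ioo 0 c,
      HasDerivAt (fun x => x * G x) (G x * (1 + x * G' x / G x)) x := by
    intro x hx
    refine ((hasDerivAt_id' x).mul (hderiv x hx)).congr_deriv ?_
    rw [mul_add, mul_div_cancel₀ _ (hpos x hx).ne']
    ring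
  have hgderiv_ne : ∀ x ∈ Ioo 0 c, G x * (1 + x * G' x / G x) ≠ 0 := fun x hx =>
    mul_ne_zero (hpos x hx).ne' (by linarith [hel x hx])
  refine HasDerivAt.lhopital_zero_right_on_Ioo hc hFderiv hgderiv hgderiv_ne
    (tendsto_integral_nhdsGT_zero (half_pos hc)
      (integrableOn_Ioc_of_elasticity hderiv hpos hel (half_lt_self hc)))
    (tendsto_mul_self_nhdsGT_zero_of_elasticity hc hderiv hpos hel) ?_
  have hinv := (tendsto_const_nhds.add ht).inv₀ (by norm_num : (1 : ℝ) + 0 ≠ 0)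
  rw [add_zero, inv_one] at hinv
  refine hinv.congr' ?_
  filter_upwards [Ioo_mem_nhdsGT_of_mem ⟨le_rfl, hc⟩] with x hx
  rw [div_mul_cancel_left₀ (hpos x hx).ne']

end Elasticity

theorem tendsto_integral_div_mul_self_of_tendsto_elasticity {G G' : ℝ → ℝ} {c : ℝ}
    (hc : 0 < c) (hderiv : ∀ x ∈ Ioo 0 c, HasDerivAt G (G' x) x)
    (hpos : ∀ x ∈ Ioo 0 c, 0 < G x) (ht : Tendsto (fun x => x * G' x / G x) (𝓝[>] 0) (𝓝 0)) :
    Tendsto (fun x => (∫ s in (0 : ℝ)..x, G s) / (x * G x)) (𝓝[>] 0) (𝓝 1) := by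
  obtain ⟨δ, hδ, hδsub⟩ :
      ∃ δ ∈ Ioi 0, Ioo 0 δ ⊆ {x | x ∈ Ioo 0 c ∧ -(1 / 2) < x * G' x / G x} :=
    mem_nhdsGT_iff_exists_Ioo_subset.1 <| Filter.Eventually.and
      (Ioo_mem_nhdsGT_of_mem ⟨le_rfl, hc⟩) (ht.eventually (lt_mem_nhds (by norm_num)))
  exact tendsto_integral_div_mul_self_of_elasticity hδ (fun x hx => hderiv x (hδsub hx).1)
    (fun x hx => hpos x (hδsub hx).1) (fun x hx => (hδsub hx).2) ht

theorem stmt14_general (𝒢 𝒢' : ℝ → ℝ) (c₀ γ : ℝ) (hc₀ : 0 < c₀)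
    (hderiv : ∀ ρ ∈ Set.Ioo (0:ℝ) c₀, HasDerivAt 𝒢 (𝒢' ρ) ρ)
    (hpos : ∀ ρ ∈ Set.Ioo (0:ℝ) c₀, 0 < 𝒢 ρ)
    (hlim : Tendsto (fun ρ => ρ * Real.log (1 / ρ) * (-𝒢' ρ) / 𝒢 ρ) (𝓝[>] 0) (𝓝 γ)) :
    Tendsto (fun ρ => (∫ s in (0:ℝ)..ρ, 𝒢 s) / (ρ * 𝒢 ρ)) (𝓝[>] 0) (𝓝 1) := by
  have hneg : Tendsto (fun ρ => -(ρ * 𝒢' ρ / 𝒢 ρ)) (𝓝[>] 0) (𝓝 0) :=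
    tendsto_zero_of_tendsto_log_inv_mul (hlim.congr fun ρ => by ring)
  exact tendsto_integral_div_mul_self_of_tendsto_elasticity hc₀ hderiv hpos
    (by simpa using hneg.neg)

/-- `(∫₀^ρ 𝒢(s) ds)/(ρ 𝒢(ρ)) → 1` as `ρ → 0⁺`. -/
theorem stmt14 (𝒢 𝒢' : ℝ → ℝ) (c₀ γ : ℝ) (hc₀ : 0 < c₀) (hγ : 0 ≤ γ)
    (hderiv : ∀ ρ ∈ Set.Ioo (0:ℝ) c₀, HasDerivAt 𝒢 (𝒢' ρ) ρ)
    (hcont : ContinuousOn 𝒢' (Set.Ioo 0 c₀))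
    (hpos : ∀ ρ ∈ Set.Ioo (0:ℝ) c₀, 0 < 𝒢 ρ)
    (hinf : Tendsto 𝒢 (𝓝[>] 0) atTop)
    (hlim : Tendsto (fun ρ => ρ * Real.log (1 / ρ) * (-𝒢' ρ) / 𝒢 ρ) (𝓝[>] 0) (𝓝 γ)) :
    Tendsto (fun ρ => (∫ s in (0:ℝ)..ρ, 𝒢 s) / (ρ * 𝒢 ρ)) (𝓝[>] 0) (𝓝 1) :=
  stmt14_general 𝒢 𝒢' c₀ γ hc₀ hderiv hpos hlim
end

section
/- Let 𝒢 : (0, c₀) → ℝ be positive and C¹ with lim_{ρ→0⁺} 𝒢(lρ)/𝒢(ρ) = 1 for every l > 0, and lim_{ρ→0⁺} ρ log(1/ρ)(-𝒢'(ρ))/𝒢(ρ) = γ for some finite γ ≥ 0. Then for any fixed constants 0 < a < b ≤ c₀/2, lim_{ρ→0⁺} (∫_{aρ}^{b} 𝒢(s)/s ds)/(log(1/ρ) · 𝒢(ρ)) = 1/(1+γ). -/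
open Set Filter Topology

/-!
Write `N ρ = ∫_{aρ}^b 𝒢(s)/s ds`, `D ρ = log(1/ρ) 𝒢(ρ)` and `r ρ = ρ log(1/ρ) (-𝒢'(ρ)) / 𝒢(ρ)`.
Then `N' ρ = -𝒢(aρ)/ρ` and `D' ρ = -(𝒢(ρ)/ρ) (1 + r ρ)`, so `N'/D' = (𝒢(aρ)/𝒢(ρ)) / (1 + r ρ)`
tends to `1/(1+γ)` by slow variation, and L'Hôpital's rule in its `∞/∞` form gives the claim
once `D → ∞`. For that, `r > -1/2` near `0` makes `log(1/ρ) 𝒢(ρ)²` decreasing in `ρ`, hence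
bounded below by some `c > 0`, and then `D ρ ≥ √(c log(1/ρ))`.
-/

theorem abs_slope_ratio_sub_le {f g f' g' : ℝ → ℝ} {a b x y L ε : ℝ}
    (hff' : ∀ t ∈ Ioo a b, HasDerivAt f (f' t) t) (hgg' : ∀ t ∈ Ioo a b, HasDerivAt g (g' t) t)
    (hg' : ∀ t ∈ Ioo a b, g' t ≠ 0) (hε : ∀ t ∈ Ioo a b, |f' t / g' t - L| ≤ ε)
    (hax : a < x) (hxy : x < y) (hyb : y < b) (hgxy : g x ≠ g y) :
    |(f x - f y) / (g x - g y) - L| ≤ ε := by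
  have hsub : Icc x y ⊆ Ioo a b := Icc_subset_Ioo hax hyb
  obtain ⟨c, hc, hcauchy⟩ := exists_ratio_hasDerivAt_eq_ratio_slope f f' hxy
    (fun t ht => (hff' t (hsub ht)).continuousAt.continuousWithinAt)
    (fun t ht => hff' t (hsub (Ioo_subset_Icc_self ht)))
    g g' (fun t ht => (hgg' t (hsub ht)).continuousAt.continuousWithinAt)
    (fun t ht => hgg' t (hsub (Ioo_subset_Icc_self ht)))
  have hc' : c ∈ Ioo a b := hsub (Ioo_subset_Icc_self hc)
  have hslope : (f x - f y) / (g x - g y) = f' c / g' c := by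
    rw [div_eq_div_iff (sub_ne_zero.mpr hgxy) (hg' c hc')]
    linarith
  rw [hslope]
  exact hε c hc'

theorem abs_div_sub_le_of_abs_slope_sub_le {fx fy gx gy L ε : ℝ} (hgx : 0 < gx) (hgxy : gy < gx)
    (hslope : |(fx - fy) / (gx - gy) - L| ≤ ε) :
    |fx / gx - L| ≤ ε + (|fy| + (|L| + ε) * |gy|) / gx := by
  set R := (fx - fy) / (gx - gy)
  have hsplit : fx / gx - L = (R - L) + (fy - R * gy) / gx := by
    have : gx - gy ≠ 0 := sub_ne_zero.mpr hgxy.ne'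
    simp only [R]
    field_simp
    ring
  have hR : |R| ≤ |L| + ε := by
    calc |R| = |L + (R - L)| := by ring_nf
      _ ≤ |L| + |R - L| := abs_add_le _ _
      _ ≤ |L| + ε := by linarith
  have hnum : |fy - R * gy| ≤ |fy| + (|L| + ε) * |gy| := by
    calc |fy - R * gy| ≤ |fy| + |R| * |gy| := by rw [← abs_mul]; exact abs_sub _ _
      _ ≤ _ := by gcongr
  rw [hsplit]
  calc |(R - L) + (fy - R * gy) / gx| ≤ |R - L| + |(fy - R * gy) / gx| := abs_add_le _ _
    _ = |R - L| + |fy - R * gy| / gx := by rw [abs_div, abs_of_pos hgx]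
    _ ≤ _ := by gcongr

theorem HasDerivAt.lhopital_atTop_nhdsGT {f g f' g' : ℝ → ℝ} {a L : ℝ}
    (hff' : ∀ᶠ x in 𝓝[>] a, HasDerivAt f (f' x) x) (hgg' : ∀ᶠ x in 𝓝[>] a, HasDerivAt g (g' x) x)
    (hg' : ∀ᶠ x in 𝓝[>] a, g' x ≠ 0) (hg : Tendsto g (𝓝[>] a) atTop)
    (hdiv : Tendsto (fun x => f' x / g' x) (𝓝[>] a) (𝓝 L)) :
    Tendsto (fun x => f x / g x) (𝓝[>] a) (𝓝 L) := by
  rw [Metric.tendsto_nhds]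
  intro ε hε
  have hnear : ∀ᶠ x in 𝓝[>] a, HasDerivAt f (f' x) x ∧ HasDerivAt g (g' x) x ∧ g' x ≠ 0 ∧
      |f' x / g' x - L| ≤ ε / 2 := by
    filter_upwards [hff', hgg', hg', hdiv (Metric.closedBall_mem_nhds L (half_pos hε))]
      with x hf hg hg' hL
    exact ⟨hf, hg, hg', hL⟩
  obtain ⟨b, hab, hb⟩ := mem_nhdsGT_iff_exists_Ioo_subset.mp hnear
  have hyb : (a + b) / 2 ∈ Ioo a b := ⟨by linarith [mem_Ioi.mp hab], by linarith [mem_Ioi.mp hab]⟩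
  set y := (a + b) / 2
  -- Compare with the Cauchy slope on `[x, y]` for a fixed `y`; the error term is `O(1 / g x)`.
  set M := |f y| + (|L| + ε / 2) * |g y|
  have hM : 0 ≤ M := by positivity
  filter_upwards [Ioo_mem_nhdsGT hyb.1, hg.eventually_gt_atTop (max (g y) (2 * M / ε))]
    with x hx hgx
  have hgxy : g y < g x := (le_max_left _ _).trans_lt hgx
  have hMgx : 2 * M / ε < g x := (le_max_right _ _).trans_lt hgx
  have hgx0 : 0 < g x := lt_of_le_of_lt (by positivity) hMgx
  have hslope := abs_slope_ratio_sub_le (fun t ht => (hb ht).1) (fun t ht => (hb ht).2.1)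
    (fun t ht => (hb ht).2.2.1) (fun t ht => (hb ht).2.2.2) hx.1 hx.2 hyb.2 hgxy.ne'
  have htail : M / g x < ε / 2 := by
    rw [div_lt_iff₀ hgx0]
    rw [div_lt_iff₀ hε] at hMgx
    linarith
  rw [Real.dist_eq]
  linarith [abs_div_sub_le_of_abs_slope_sub_le hgx0 hgxy hslope]

theorem hasDerivAt_intervalIntegral_mul_left_lower {f : ℝ → ℝ} {U : Set ℝ} (hU : IsOpen U)
    (hf : ContinuousOn f U) {a b x : ℝ} (hx : uIcc (a * x) b ⊆ U) :
    HasDerivAt (fun x => ∫ s in a * x..b, f s) (-(a * f (a * x))) x := by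
  have hax : a * x ∈ U := hx left_mem_uIcc
  have h := intervalIntegral.integral_hasDerivAt_left (hf.mono hx).intervalIntegrable
    (hf.stronglyMeasurableAtFilter hU _ hax) (hf.continuousAt (hU.mem_nhds hax))
  exact (h.comp x ((hasDerivAt_id x).const_mul a)).congr_deriv (by ring)

theorem HasDerivAt.log_inv_mul {G : ℝ → ℝ} {G' x : ℝ} (hG : HasDerivAt G G' x) (hx : x ≠ 0) :
    HasDerivAt (fun x => Real.log (1 / x) * G x) (-(G x / x) + Real.log (1 / x) * G') x := by
  have hlog : HasDerivAt (fun x => Real.log (1 / x)) (-x⁻¹) x :=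
    (Real.hasDerivAt_log hx).neg.congr_of_eventuallyEq
      (.of_forall fun y => by simp [Real.log_inv])
  exact (hlog.mul hG).congr_deriv (by ring)

theorem tendsto_log_inv_nhdsGT_zero : Tendsto (fun x => Real.log (1 / x)) (𝓝[>] 0) atTop :=
  (tendsto_neg_atBot_atTop.comp Real.tendsto_log_nhdsGT_zero).congr
    fun x => by simp [Real.log_inv]

theorem antitoneOn_log_inv_mul_mul_self {G G' : ℝ → ℝ} {δ : ℝ}
    (hG : ∀ x ∈ Ioo 0 δ, HasDerivAt G (G' x) x) (hpos : ∀ x ∈ Ioo 0 δ, 0 < G x)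
    (hr : ∀ x ∈ Ioo 0 δ, -(1 / 2) < x * Real.log (1 / x) * (-G' x) / G x) :
    AntitoneOn (fun x => Real.log (1 / x) * G x * G x) (Ioo 0 δ) := by
  have hderiv : ∀ x ∈ Ioo 0 δ, HasDerivAt (fun x => Real.log (1 / x) * G x * G x)
      ((-(G x / x) + Real.log (1 / x) * G' x) * G x + Real.log (1 / x) * G x * G' x) x :=
    fun x hx => ((hG x hx).log_inv_mul hx.1.ne').mul (hG x hx)
  refine antitoneOn_of_hasDerivWithinAt_nonpos (convex_Ioo 0 δ)
    (fun x hx => (hderiv x hx).continuousAt.continuousWithinAt)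
    (fun x hx => (hderiv x (interior_subset hx)).hasDerivWithinAt) fun x hx => ?_
  rw [interior_Ioo] at hx
  have hGx := hpos x hx
  have hx0 := hx.1
  have hbound : 2 * (x * Real.log (1 / x) * G' x) - G x < 0 := by
    have hrx := hr x hx
    rw [lt_div_iff₀ hGx] at hrx
    linarith
  have hfactor : (-(G x / x) + Real.log (1 / x) * G' x) * G x + Real.log (1 / x) * G x * G' x
      = G x / x * (2 * (x * Real.log (1 / x) * G' x) - G x) := by
    field_simp
    ring
  rw [hfactor]
  exact mul_nonpos_of_nonneg_of_nonpos (by positivity) hbound.le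

theorem tendsto_log_inv_mul_atTop {G G' : ℝ → ℝ}
    (hG : ∀ᶠ x in 𝓝[>] 0, HasDerivAt G (G' x) x) (hpos : ∀ᶠ x in 𝓝[>] 0, 0 < G x)
    (hr : ∀ᶠ x in 𝓝[>] 0, -(1 / 2) < x * Real.log (1 / x) * (-G' x) / G x) :
    Tendsto (fun x => Real.log (1 / x) * G x) (𝓝[>] 0) atTop := by
  obtain ⟨δ, hδ, hsub⟩ := mem_nhdsGT_iff_exists_Ioo_subset.mp
    (hG.and (hpos.and (hr.and (Ioo_mem_nhdsGT one_pos))))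
  have hanti := antitoneOn_log_inv_mul_mul_self (fun x hx => (hsub hx).1)
    (fun x hx => (hsub hx).2.1) (fun x hx => (hsub hx).2.2.1)
  have hx₀ : δ / 2 ∈ Ioo 0 δ := ⟨half_pos hδ, half_lt_self hδ⟩
  obtain ⟨-, hGx₀, -, hx₀1⟩ := hsub hx₀
  set c := Real.log (1 / (δ / 2)) * G (δ / 2) * G (δ / 2)
  have hc : 0 < c := by
    have := Real.log_pos ((one_lt_div hx₀1.1).mpr hx₀1.2)
    positivity
  refine tendsto_atTop_mono' _ ?_
    (Real.tendsto_sqrt_atTop.comp (tendsto_log_inv_nhdsGT_zero.const_mul_atTop hc))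
  filter_upwards [Ioo_mem_nhdsGT hx₀.1] with x hx
  have hxδ : x ∈ Ioo 0 δ := ⟨hx.1, hx.2.trans hx₀.2⟩
  obtain ⟨-, hGx, -, hx1⟩ := hsub hxδ
  have hLx := Real.log_pos ((one_lt_div hx1.1).mpr hx1.2)
  rw [Function.comp_apply, Real.sqrt_le_iff]
  refine ⟨by positivity, ?_⟩
  calc c * Real.log (1 / x) ≤ Real.log (1 / x) * G x * G x * Real.log (1 / x) :=
        mul_le_mul_of_nonneg_right (hanti hxδ hx₀ hx.2.le) hLx.le
    _ = _ := by ring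

theorem stmt15_general (𝒢 𝒢' : ℝ → ℝ) (c₀ γ a b : ℝ) (hγ : 0 ≤ γ)
    (ha : 0 < a) (hab : a < b) (hb : b ≤ c₀ / 2)
    (hderiv : ∀ ρ ∈ Set.Ioo (0:ℝ) c₀, HasDerivAt 𝒢 (𝒢' ρ) ρ)
    (hpos : ∀ ρ ∈ Set.Ioo (0:ℝ) c₀, 0 < 𝒢 ρ)
    (hslow : ∀ l > (0:ℝ), Tendsto (fun ρ => 𝒢 (l * ρ) / 𝒢 ρ) (𝓝[>] 0) (𝓝 1))
    (hlim : Tendsto (fun ρ => ρ * Real.log (1 / ρ) * (-𝒢' ρ) / 𝒢 ρ) (𝓝[>] 0) (𝓝 γ)) :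
    Tendsto (fun ρ => (∫ s in (a * ρ)..b, 𝒢 s / s) / (Real.log (1 / ρ) * 𝒢 ρ))
      (𝓝[>] 0) (𝓝 (1 / (1 + γ))) := by
  have hb0 : 0 < b := ha.trans hab
  have hdom : ∀ᶠ ρ in 𝓝[>] (0:ℝ), ρ ∈ Ioo 0 c₀ := Ioo_mem_nhdsGT (by linarith)
  have hD := tendsto_log_inv_mul_atTop (hdom.mono hderiv) (hdom.mono hpos)
    (hlim.eventually (Ioi_mem_nhds (by linarith)))
  have hcont : ContinuousOn (fun s => 𝒢 s / s) (Ioo 0 c₀) :=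
    ContinuousOn.div (fun s hs => (hderiv s hs).continuousAt.continuousWithinAt) continuousOn_id
      fun s hs => hs.1.ne'
  have hderivD : ∀ ρ ∈ Ioo 0 c₀, -(𝒢 ρ / ρ) + Real.log (1 / ρ) * 𝒢' ρ
      = -(𝒢 ρ / ρ) * (1 + ρ * Real.log (1 / ρ) * (-𝒢' ρ) / 𝒢 ρ) := fun ρ hρ => by
    field_simp [(hpos ρ hρ).ne', hρ.1.ne']
    ring
  refine HasDerivAt.lhopital_atTop_nhdsGT (f' := fun ρ => -(a * (𝒢 (a * ρ) / (a * ρ)))) ?_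
    (hdom.mono fun ρ hρ => (hderiv ρ hρ).log_inv_mul hρ.1.ne') ?_ hD ?_
  · filter_upwards [Ioo_mem_nhdsGT (div_pos hb0 ha)] with ρ hρ
    refine hasDerivAt_intervalIntegral_mul_left_lower isOpen_Ioo hcont ?_
    have haρ : a * ρ < b := (lt_div_iff₀' ha).mp hρ.2
    rw [uIcc_of_le haρ.le]
    exact Icc_subset_Ioo (mul_pos ha hρ.1) (by linarith)
  · filter_upwards [hdom, hlim.eventually (Ioi_mem_nhds (by linarith : -1 < γ))] with ρ hρ hrρ
    rw [hderivD ρ hρ]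
    have := div_pos (hpos ρ hρ) hρ.1
    exact mul_ne_zero (by linarith) (by linarith)
  · have hratio := (hslow a ha).div (tendsto_const_nhds.add hlim) (by linarith : 1 + γ ≠ 0)
    refine hratio.congr' ?_
    filter_upwards [hdom] with ρ hρ
    rw [hderivD ρ hρ]
    simp only [Pi.div_apply]
    field_simp [(hpos ρ hρ).ne', hρ.1.ne', ha.ne']

/-- `(∫_{aρ}^{b} 𝒢(s)/s ds)/(log(1/ρ) 𝒢(ρ)) → 1/(1+γ)` as `ρ → 0⁺`. -/
theorem stmt15 (𝒢 𝒢' : ℝ → ℝ) (c₀ γ a b : ℝ) (hc₀ : 0 < c₀) (hγ : 0 ≤ γ)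
    (ha : 0 < a) (hab : a < b) (hb : b ≤ c₀ / 2)
    (hderiv : ∀ ρ ∈ Set.Ioo (0:ℝ) c₀, HasDerivAt 𝒢 (𝒢' ρ) ρ)
    (hcont : ContinuousOn 𝒢' (Set.Ioo 0 c₀))
    (hpos : ∀ ρ ∈ Set.Ioo (0:ℝ) c₀, 0 < 𝒢 ρ)
    (hslow : ∀ l > (0:ℝ), Tendsto (fun ρ => 𝒢 (l * ρ) / 𝒢 ρ) (𝓝[>] 0) (𝓝 1))
    (hlim : Tendsto (fun ρ => ρ * Real.log (1 / ρ) * (-𝒢' ρ) / 𝒢 ρ) (𝓝[>] 0) (𝓝 γ)) :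
    Tendsto (fun ρ => (∫ s in (a * ρ)..b, 𝒢 s / s) / (Real.log (1 / ρ) * 𝒢 ρ))
      (𝓝[>] 0) (𝓝 (1 / (1 + γ))) :=
  stmt15_general 𝒢 𝒢' c₀ γ a b hγ ha hab hb hderiv hpos hslow hlim
end
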